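/- There is a universal constant C such that the following holds. Let S_1, ..., S_k be a partition of {0,1}^n and let Q be a k-part symmetric property with respect to this partition, meaning membership of a Boolean function f in Q depends only on the vector of densities (E_{x uniform}[f(x)·1[x ∈ S_1]], ..., E_{x uniform}[f(x)·1[x ∈ S_k]]). Then for every ε > 0 there exist a natural number m ≤ C·k^2·(1 + log k)/ε^2 and a deterministic function T : ({0,1}^n × {0,1})^m → {0,1} such that, over m i.i.d. uniform samples x_i with labels f(x_i): if f ∈ Q then T outputs 1 with probability at least 2/3, and if f is not in Q_ε then T outputs 0 with probability at least 2/3. -/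
import Mathlib


/-- Probability that a deterministic tester `T` outputs `1` (Accept) on `m` i.i.d.
uniform samples from `{0,1}^n` labeled by `f`. -/
noncomputable def acceptProb0 (n m : ℕ)
    (T : (Fin m → (Fin n → Bool)) → (Fin m → Bool) → Bool)
    (f : (Fin n → Bool) → Bool) : ℝ :=
  (∑ x : Fin m → (Fin n → Bool),
      if T x (fun i => f (x i)) then (1 : ℝ) else 0) / (2 : ℝ) ^ (n * m)

/-- Normalized Hamming distance between Boolean functions on `{0,1}^n`. -/
noncomputable def fdist (n : ℕ) (f g : (Fin n → Bool) → Bool) : ℝ :=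
  ((Finset.univ.filter fun x => f x ≠ g x).card : ℝ) / 2 ^ n

/-- `closeTo n Q ε` is `Q_ε`: the Boolean functions within distance `ε` of `Q`. -/
def closeTo (n : ℕ) (Q : Set ((Fin n → Bool) → Bool)) (ε : ℝ) :
    Set ((Fin n → Bool) → Bool) :=
  {f | ∃ g ∈ Q, fdist n f g ≤ ε}

/-- Density of `f` on the part `S`: `E_{x uniform}[f(x)·1[x ∈ S]]`. -/
noncomputable def density (n : ℕ) (S : Finset (Fin n → Bool))
    (f : (Fin n → Bool) → Bool) : ℝ :=
  (∑ x ∈ S, if f x then (1 : ℝ) else 0) / 2 ^ n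

open Finset

section Aux

lemma aux_sum_pi_prod {X : Type} [Fintype X] (m : ℕ) (ψ : Fin m → X → ℝ) :
    ∑ x : Fin m → X, ∏ i, ψ i (x i) = ∏ i, ∑ y, ψ i y := by
  rw [Finset.prod_univ_sum]
  simp [Fintype.piFinset_univ]

lemma aux_pair_sum {X : Type} [Fintype X] (m : ℕ) (ψ : X → ℝ) (hψ : ∑ y, ψ y = 0)
    (i i' : Fin m) :
    ∑ x : Fin m → X, ψ (x i) * ψ (x i') =
      if i = i' then (Fintype.card X : ℝ) ^ (m - 1) * ∑ y, ψ y ^ 2 else 0 := by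
  have h1 : ∀ x : Fin m → X, ψ (x i) * ψ (x i') =
      ∏ l, ((if l = i then ψ (x l) else 1) * (if l = i' then ψ (x l) else 1)) := by
    intro x
    rw [Finset.prod_mul_distrib, Finset.prod_ite_eq', Finset.prod_ite_eq']
    simp
  simp_rw [h1]
  rw [aux_sum_pi_prod m (fun l y => (if l = i then ψ y else 1) * (if l = i' then ψ y else 1))]
  by_cases h : i = i'
  · subst h
    simp only [if_pos rfl]
    have : ∀ l : Fin m, (∑ y, (if l = i then ψ y else 1) * (if l = i then ψ y else 1)) =
        if l = i then ∑ y, ψ y ^ 2 else (Fintype.card X : ℝ) := by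
      intro l
      by_cases hl : l = i <;> simp [hl, sq]
    simp_rw [this]
    rw [← Finset.mul_prod_erase univ _ (mem_univ i), if_pos rfl]
    rw [Finset.prod_congr rfl (fun l hl => if_neg (Finset.ne_of_mem_erase hl)),
      Finset.prod_const, Finset.card_erase_of_mem (mem_univ i)]
    simp [mul_comm]
  · rw [if_neg h]
    apply Finset.prod_eq_zero (mem_univ i)
    simp [if_neg (Ne.symm h), hψ, h]

lemma aux_var_sum {X : Type} [Fintype X] (m : ℕ) (ψ : X → ℝ) (hψ : ∑ y, ψ y = 0) :
    ∑ x : Fin m → X, (∑ i, ψ (x i)) ^ 2 =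
      m * (Fintype.card X : ℝ) ^ (m - 1) * ∑ y, ψ y ^ 2 := by
  have h1 : ∀ x : Fin m → X, (∑ i, ψ (x i)) ^ 2 = ∑ i, ∑ i', ψ (x i) * ψ (x i') := by
    intro x; rw [sq, Finset.sum_mul_sum]
  simp_rw [h1]
  rw [Finset.sum_comm]
  have h2 : ∀ i : Fin m, ∑ x : Fin m → X, ∑ i', ψ (x i) * ψ (x i') =
      (Fintype.card X : ℝ) ^ (m - 1) * ∑ y, ψ y ^ 2 := by
    intro i
    rw [Finset.sum_comm]
    simp_rw [aux_pair_sum m ψ hψ i]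
    rw [Finset.sum_ite_eq univ i]
    simp
  simp_rw [h2, Finset.sum_const, Finset.card_univ, Fintype.card_fin, nsmul_eq_mul, mul_assoc]

lemma aux_flipPart {X : Type} [DecidableEq X] (A : Finset X) (f : X → Bool) (c : ℕ)
    (hc : c ≤ A.card) :
    ∃ F ⊆ A, ((A.filter (fun x => xor (f x) (x ∈ F))).card = c) ∧
      (F.card : ℝ) = |((A.filter (fun x => f x)).card : ℝ) - c| := by
  set a := (A.filter (fun x => f x)).card with ha
  by_cases h : c ≤ a
  · obtain ⟨F, hFsub, hFcard⟩ :=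
      Finset.exists_subset_card_eq (n := a - c) (s := A.filter (fun x => f x)) (Nat.sub_le _ _)
    refine ⟨F, hFsub.trans (filter_subset _ _), ?_, ?_⟩
    · have heq : A.filter (fun x => xor (f x) (x ∈ F)) = (A.filter (fun x => f x)) \ F := by
        ext x
        simp only [mem_filter, mem_sdiff]
        constructor
        · rintro ⟨hxA, hx⟩
          by_cases hxF : x ∈ F
          · have := hFsub hxF
            simp only [mem_filter] at this
            simp [hxF, this.2] at hx
          · simp [hxF] at hx
            exact ⟨⟨hxA, hx⟩, hxF⟩
        · rintro ⟨⟨hxA, hxf⟩, hxF⟩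
          refine ⟨hxA, by simp [hxF, hxf]⟩
      rw [heq, Finset.card_sdiff_of_subset hFsub, hFcard, ← ha]
      omega
    · rw [hFcard]
      rw [abs_of_nonneg (by linarith [(Nat.cast_le (α := ℝ)).2 h])]
      exact Nat.cast_sub h
  · push_neg at h
    have hb : c - a ≤ (A.filter (fun x => ¬ f x)).card := by
      have : (A.filter (fun x => ¬ f x)).card = A.card - a := by
        rw [ha, Finset.filter_not, Finset.card_sdiff_of_subset (filter_subset _ _)]
      omega
    obtain ⟨F, hFsub, hFcard⟩ :=
      Finset.exists_subset_card_eq (n := c - a) (s := A.filter (fun x => ¬ f x)) hb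
    · refine ⟨F, hFsub.trans (filter_subset _ _), ?_, ?_⟩
      · have heq : A.filter (fun x => xor (f x) (x ∈ F)) = (A.filter (fun x => f x)) ∪ F := by
          ext x
          simp only [mem_filter, mem_union]
          constructor
          · rintro ⟨hxA, hx⟩
            by_cases hxF : x ∈ F
            · exact Or.inr hxF
            · simp [hxF] at hx; exact Or.inl ⟨hxA, hx⟩
          · intro hx
            rcases hx with ⟨hxA, hxf⟩ | hxF
            · have hxF : x ∉ F := by
                intro hxF
                have := hFsub hxF
                simp only [mem_filter] at this
                simp [hxf] at this
              exact ⟨hxA, by simp [hxF, hxf]⟩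
            · have := hFsub hxF
              simp only [mem_filter] at this
              exact ⟨this.1, by simp [hxF, this.2]⟩
        have hdisj : Disjoint (A.filter (fun x => f x)) F := by
          refine Finset.disjoint_left.2 fun x hx hxF => ?_
          have := hFsub hxF
          simp only [mem_filter] at hx this
          simp [hx.2] at this
        rw [heq, Finset.card_union_of_disjoint hdisj, hFcard, ← ha]
        omega
      · rw [hFcard, abs_of_nonpos (by linarith [(Nat.cast_lt (α := ℝ)).2 h]),
          Nat.cast_sub h.le]
        ring

lemma aux_mod (n k : ℕ) (S : Fin k → Finset (Fin n → Bool))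
    (hdisj : ∀ i j, i ≠ j → Disjoint (S i) (S j))
    (f g : (Fin n → Bool) → Bool) :
    ∃ h : (Fin n → Bool) → Bool,
      (∀ j, density n (S j) h = density n (S j) g) ∧
      fdist n f h = ∑ j, |density n (S j) f - density n (S j) g| := by
  classical
  have hc : ∀ j, ((S j).filter (fun x => g x)).card ≤ (S j).card :=
    fun j => Finset.card_le_card (filter_subset _ _)
  choose F hF1 hF2 hF3 using fun j => aux_flipPart (S j) f _ (hc j)
  set Fall : Finset (Fin n → Bool) := Finset.univ.biUnion F with hFall
  refine ⟨fun x => xor (f x) (decide (x ∈ Fall)), ?_, ?_⟩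
  · intro j
    have hmem : ∀ x ∈ S j, (x ∈ Fall ↔ x ∈ F j) := by
      intro x hx
      constructor
      · intro hxF
        rw [hFall, Finset.mem_biUnion] at hxF
        obtain ⟨j', -, hj'⟩ := hxF
        rcases eq_or_ne j' j with rfl | hne
        · exact hj'
        · exact absurd hx (Finset.disjoint_left.1 (hdisj j' j hne) (hF1 j' hj'))
      · intro hxF
        exact Finset.mem_biUnion.2 ⟨j, Finset.mem_univ j, hxF⟩
    have h1 : ((S j).filter (fun x => (xor (f x) (decide (x ∈ Fall))) = true))
        = ((S j).filter (fun x => (xor (f x) (decide (x ∈ F j))) = true)) :=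
      Finset.filter_congr (fun x hx => by simp [hmem x hx])
    unfold density
    rw [Finset.sum_boole, Finset.sum_boole, h1, hF2 j]
  · have hset : (Finset.univ.filter fun x => f x ≠ xor (f x) (decide (x ∈ Fall))) = Fall := by
      ext x
      by_cases hx : x ∈ Fall <;> cases hfx : f x <;> simp [hx, hfx]
    unfold fdist
    rw [hset]
    have hdisjF : ∀ i ∈ (Finset.univ : Finset (Fin k)), ∀ j ∈ Finset.univ, i ≠ j →
        Disjoint (F i) (F j) :=
      fun i _ j _ hij => (hdisj i j hij).mono (hF1 i) (hF1 j)
    rw [hFall, Finset.card_biUnion hdisjF]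
    push_cast
    rw [Finset.sum_div]
    refine Finset.sum_congr rfl fun j _ => ?_
    rw [hF3 j]
    unfold density
    rw [Finset.sum_boole, Finset.sum_boole, div_sub_div_same, abs_div]
    rw [abs_of_nonneg (by positivity : (0:ℝ) ≤ (2:ℝ)^n)]

end Aux

set_option maxHeartbeats 2000000 in
/-- **Symmetric properties are testable.** There is a universal constant `C` such that
for every partition `S 1, …, S k` of `{0,1}^n` and every property `Q` that is `k`-part
symmetric with respect to it (membership depends only on the vector of densities), and
every `ε > 0`, there is a deterministic tester using `m ≤ C·k²·(1 + log k)/ε²` i.i.d.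
uniform samples that accepts every `f ∈ Q` with probability at least `2/3` and rejects
every `f ∉ Q_ε` with probability at least `2/3`. -/
theorem stmt_11 : ∃ C : ℝ, 0 < C ∧
    ∀ (n k : ℕ) (S : Fin k → Finset (Fin n → Bool)),
      (∀ i j, i ≠ j → Disjoint (S i) (S j)) →
      Finset.univ.biUnion S = Finset.univ →
      ∀ Q : Set ((Fin n → Bool) → Bool),
        (∀ f g : (Fin n → Bool) → Bool,
          (∀ j, density n (S j) f = density n (S j) g) → (f ∈ Q ↔ g ∈ Q)) →
        ∀ ε : ℝ, 0 < ε →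
        ∃ (m : ℕ) (T : (Fin m → (Fin n → Bool)) → (Fin m → Bool) → Bool),
          (m : ℝ) ≤ C * k ^ 2 * (1 + Real.log k) / ε ^ 2 ∧
          (∀ f ∈ Q, 2 / 3 ≤ acceptProb0 n m T f) ∧
          (∀ f, f ∉ closeTo n Q ε → acceptProb0 n m T f ≤ 1 / 3) := by
  classical
  refine ⟨13, by norm_num, ?_⟩
  intro n k S hdisj hcover Q hsym ε hε
  -- k ≥ 1
  have hk : 0 < k := by
    rcases Nat.eq_zero_or_pos k with rfl | h
    · exfalso
      have : (fun _ => false : Fin n → Bool) ∈ Finset.univ.biUnion S :=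
        hcover ▸ Finset.mem_univ _
      rw [Finset.mem_biUnion] at this
      obtain ⟨j, -, -⟩ := this
      exact j.elim0
    · exact h
  have hk1 : (1:ℝ) ≤ (k:ℝ) := by exact_mod_cast hk
  have hlogk : 0 ≤ Real.log k := Real.log_nonneg hk1
  by_cases hQ : Q = ∅
  · -- empty property : always reject
    refine ⟨0, fun _ _ => false, ?_, ?_, ?_⟩
    · norm_num
      apply div_nonneg _ (le_of_lt (by positivity))
      nlinarith [hlogk, sq_nonneg (k:ℝ)]
    · intro f hf; simp [hQ] at hf
    · intro f _
      simp [acceptProb0]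
  by_cases hε1 : 1 ≤ ε
  · -- ε ≥ 1 : everything is close to the nonempty Q, always accept
    refine ⟨0, fun _ _ => true, ?_, ?_, ?_⟩
    · norm_num
      apply div_nonneg _ (le_of_lt (by positivity))
      nlinarith [hlogk, sq_nonneg (k:ℝ)]
    · intro f _
      have : acceptProb0 n 0 (fun _ _ => true) f = 1 := by
        simp [acceptProb0]
      rw [this]; norm_num
    · intro f hf
      exfalso
      apply hf
      obtain ⟨g, hg⟩ := Set.nonempty_iff_ne_empty.2 hQ
      refine ⟨g, hg, ?_⟩
      have h1 : fdist n f g ≤ 1 := by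
        unfold fdist
        rw [div_le_one (by positivity)]
        have := Finset.card_filter_le Finset.univ (fun x => f x ≠ g x)
        have hcardu : (Finset.univ : Finset (Fin n → Bool)).card = 2 ^ n := by
          simp [Finset.card_univ]
        calc ((Finset.univ.filter fun x => f x ≠ g x).card : ℝ)
            ≤ ((Finset.univ : Finset (Fin n → Bool)).card : ℝ) := by exact_mod_cast this
          _ = 2 ^ n := by rw [hcardu]; push_cast; ring
      linarith
  push_neg at hε1
  -- main case
  have hε2 : (0:ℝ) < ε ^ 2 := by positivity
  set m : ℕ := ⌈(12 * k / ε ^ 2 : ℝ)⌉₊ with hm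
  have hmlb : (12 * k / ε ^ 2 : ℝ) ≤ m := Nat.le_ceil _
  have hmpos : 0 < m := by
    rw [hm, Nat.ceil_pos]
    positivity
  have hcardX : (Fintype.card (Fin n → Bool) : ℝ) = 2 ^ n := by
    simp [Fintype.card_fun]
  have hNm : ((Fintype.card (Fin n → Bool) : ℝ)) ^ m = (2:ℝ) ^ (n * m) := by
    rw [hcardX, pow_mul]
  -- the tester
  set cnt : (Fin m → (Fin n → Bool)) → (Fin m → Bool) → Fin k → ℝ :=
    fun x y j => ∑ i, if (x i ∈ S j ∧ y i) then (1:ℝ) else 0 with hcnt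
  set T : (Fin m → (Fin n → Bool)) → (Fin m → Bool) → Bool :=
    fun x y => if (∃ g ∈ Q, ∑ j, |cnt x y j / m - density n (S j) g| ≤ ε/2)
      then true else false with hT
  -- the concentration bound: with probability ≥ 2/3 all empirical densities are
  -- simultaneously close (in ℓ¹) to the true densities
  have hm0 : (m:ℝ) ≠ 0 := by positivity
  have hmR : (0:ℝ) < m := by positivity
  have hcardXM : ((Fintype.card (Fin m → (Fin n → Bool)) : ℕ) : ℝ) = (2:ℝ) ^ (n * m) := by
    rw [Fintype.card_fun, Fintype.card_fin]
    push_cast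
    exact hNm
  have key : ∀ f : (Fin n → Bool) → Bool,
      ((Finset.univ.filter (fun x : Fin m → (Fin n → Bool) =>
        ¬ (∑ j, |cnt x (fun i => f (x i)) j / m - density n (S j) f| ≤ ε/2))).card : ℝ)
        ≤ (2:ℝ) ^ (n * m) / 3 := by
    intro f
    set p : Fin k → ℝ := fun j => density n (S j) f with hp
    set φ : Fin k → (Fin n → Bool) → ℝ := fun j y => if (y ∈ S j ∧ f y) then 1 else 0 with hφ
    set ψ : Fin k → (Fin n → Bool) → ℝ := fun j y => φ j y - p j with hψ
    have hφsum : ∀ j, ∑ y, φ j y = 2 ^ n * p j := by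
      intro j
      have e1 : ∀ y : (Fin n → Bool), φ j y = if y ∈ S j then (if f y then (1:ℝ) else 0) else 0 := by
        intro y
        by_cases h1 : y ∈ S j <;> by_cases h2 : f y <;> simp [hφ, h1, h2]
      rw [Finset.sum_congr rfl (fun y _ => e1 y), Finset.sum_ite_mem, Finset.univ_inter]
      simp only [hp]
      unfold density
      field_simp
    have hψ0 : ∀ j, ∑ y, ψ j y = 0 := by
      intro j
      simp only [hψ, Finset.sum_sub_distrib, Finset.sum_const, Finset.card_univ,
        nsmul_eq_mul, hφsum j, hcardX]
      ring
    have hψsq : ∀ j, ∑ y, ψ j y ^ 2 ≤ ∑ y, φ j y := by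
      intro j
      have e1 : ∀ y : (Fin n → Bool), ψ j y ^ 2 = φ j y - 2 * p j * φ j y + p j ^ 2 := by
        intro y
        have hφ2 : φ j y ^ 2 = φ j y := by
          by_cases h1 : (y ∈ S j ∧ f y) <;> simp [hφ, h1]
        have e : ψ j y ^ 2 = φ j y ^ 2 - 2 * p j * φ j y + p j ^ 2 := by
          simp only [hψ]; ring
        rw [e, hφ2]
      have e2 : ∑ y, ψ j y ^ 2
          = (∑ y, φ j y) - 2 * p j * (∑ y, φ j y) + 2 ^ n * p j ^ 2 := by
        rw [Finset.sum_congr rfl (fun y _ => e1 y), Finset.sum_add_distrib,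
          Finset.sum_sub_distrib, ← Finset.mul_sum, Finset.sum_const, Finset.card_univ,
          nsmul_eq_mul, hcardX]
      rw [e2, hφsum j]
      nlinarith [sq_nonneg (p j), pow_pos (show (0:ℝ) < 2 by norm_num) n]
    have hφtot : ∑ j, ∑ y, φ j y ≤ (2:ℝ) ^ n := by
      rw [Finset.sum_comm]
      have hy : ∀ y : (Fin n → Bool), ∑ j, φ j y ≤ 1 := by
        intro y
        have e : ∑ j, φ j y = ((Finset.univ.filter (fun j : Fin k => y ∈ S j ∧ f y)).card : ℝ) := by
          simp only [hφ]
          rw [Finset.sum_boole]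
        rw [e]
        have hle : (Finset.univ.filter (fun j : Fin k => y ∈ S j ∧ f y)).card ≤ 1 := by
          rw [Finset.card_le_one]
          intro a ha b hb
          simp only [Finset.mem_filter] at ha hb
          by_contra hne
          exact Finset.disjoint_left.1 (hdisj a b hne) ha.2.1 hb.2.1
        exact_mod_cast hle
      calc ∑ y : (Fin n → Bool), ∑ j, φ j y ≤ ∑ _y : (Fin n → Bool), (1:ℝ) := Finset.sum_le_sum (fun y _ => hy y)
        _ = (2:ℝ) ^ n := by
            rw [Finset.sum_const, Finset.card_univ, nsmul_eq_mul, hcardX, mul_one]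
    set D : (Fin m → (Fin n → Bool)) → ℝ := fun x => ∑ j, (∑ i, ψ j (x i)) ^ 2 with hD
    have hDnn : ∀ x, 0 ≤ D x := fun x => Finset.sum_nonneg fun j _ => sq_nonneg _
    have hDsum : ∑ x : Fin m → (Fin n → Bool), D x ≤ m * (2:ℝ) ^ (n * m) := by
      simp only [hD]
      rw [Finset.sum_comm]
      rw [Finset.sum_congr rfl (fun j _ => aux_var_sum m (ψ j) (hψ0 j))]
      have e3 : ((2:ℝ)^n) ^ (m-1) * (2:ℝ)^n = (2:ℝ) ^ (n*m) := by
        rw [← pow_succ, Nat.sub_add_cancel hmpos, ← pow_mul]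
      calc ∑ j, (m:ℝ) * (Fintype.card (Fin n → Bool):ℝ)^(m-1) * ∑ y, ψ j y ^ 2
          ≤ ∑ j, (m:ℝ) * (Fintype.card (Fin n → Bool):ℝ)^(m-1) * ∑ y, φ j y :=
            Finset.sum_le_sum (fun j _ =>
              mul_le_mul_of_nonneg_left (hψsq j) (by positivity))
        _ = (m:ℝ) * (Fintype.card (Fin n → Bool):ℝ)^(m-1) * ∑ j, ∑ y, φ j y := by
            rw [Finset.mul_sum]
        _ ≤ (m:ℝ) * (Fintype.card (Fin n → Bool):ℝ)^(m-1) * (2:ℝ)^n :=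
            mul_le_mul_of_nonneg_left hφtot (by positivity)
        _ = (m:ℝ) * (2:ℝ)^(n*m) := by rw [hcardX, mul_assoc, e3]
    set Bad : Finset (Fin m → (Fin n → Bool)) := Finset.univ.filter (fun x : Fin m → (Fin n → Bool) =>
      ¬ (∑ j, |cnt x (fun i => f (x i)) j / m - density n (S j) f| ≤ ε/2)) with hBad
    have hrel : ∀ (x : Fin m → (Fin n → Bool)) (j : Fin k),
        cnt x (fun i => f (x i)) j / m - p j = (∑ i, ψ j (x i)) / m := by
      intro x j
      have h1 : cnt x (fun i => f (x i)) j = ∑ i, φ j (x i) := rfl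
      rw [h1]
      simp only [hψ, Finset.sum_sub_distrib, Finset.sum_const, Finset.card_univ,
        Fintype.card_fin, nsmul_eq_mul]
      field_simp
    have hpt : ∀ x ∈ Bad, (m:ℝ)^2 * ε^2 / (4*k) ≤ D x := by
      intro x hx
      rw [hBad, Finset.mem_filter] at hx
      have hgt : ε/2 < ∑ j, |cnt x (fun i => f (x i)) j / m - density n (S j) f| :=
        not_le.1 hx.2
      set A : ℝ := ∑ j, |∑ i, ψ j (x i)| with hA
      have hAnn : 0 ≤ A := Finset.sum_nonneg fun j _ => abs_nonneg _
      have hgt2 : ε/2 * m < A := by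
        have e4 : ∑ j, |cnt x (fun i => f (x i)) j / m - density n (S j) f| = A / m := by
          rw [hA, Finset.sum_div]
          refine Finset.sum_congr rfl fun j _ => ?_
          rw [show density n (S j) f = p j from rfl, hrel x j, abs_div,
            abs_of_pos hmR]
        rw [e4, lt_div_iff₀ hmR] at hgt
        exact hgt
      have hCS : A^2 ≤ (k:ℝ) * D x := by
        have := sq_sum_le_card_mul_sum_sq (s := (Finset.univ : Finset (Fin k)))
          (f := fun j => |∑ i, ψ j (x i)|)
        simpa [hA, hD, sq_abs, Finset.card_univ] using this
      have h5 : (ε/2*m)^2 < (k:ℝ) * D x := by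
        refine lt_of_lt_of_le ?_ hCS
        exact pow_lt_pow_left₀ hgt2 (by positivity) (by norm_num)
      rw [div_le_iff₀ (by positivity : (0:ℝ) < 4*k)]
      nlinarith [h5]
    have hmarkov : (Bad.card : ℝ) * ((m:ℝ)^2 * ε^2 / (4*k)) ≤ (m:ℝ) * (2:ℝ)^(n*m) := by
      have h6 : (Bad.card : ℝ) * ((m:ℝ)^2 * ε^2 / (4*k)) ≤ ∑ x ∈ Bad, D x := by
        calc (Bad.card : ℝ) * ((m:ℝ)^2 * ε^2 / (4*k)) = ∑ _x ∈ Bad, ((m:ℝ)^2 * ε^2 / (4*k)) := by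
              rw [Finset.sum_const, nsmul_eq_mul]
          _ ≤ ∑ x ∈ Bad, D x := Finset.sum_le_sum hpt
      have h7 : ∑ x ∈ Bad, D x ≤ ∑ x : Fin m → (Fin n → Bool), D x :=
        Finset.sum_le_sum_of_subset_of_nonneg (Finset.filter_subset _ _)
          (fun x _ _ => hDnn x)
      linarith [hDsum]
    -- conclude
    have hc0 : (0:ℝ) < (m:ℝ)^2 * ε^2 / (4*k) := by positivity
    have h12 : 12 * (k:ℝ) ≤ (m:ℝ) * ε^2 := by
      rw [div_le_iff₀ hε2] at hmlb
      linarith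
    have hc3 : 3 * (m:ℝ) ≤ (m:ℝ)^2 * ε^2 / (4*k) := by
      rw [le_div_iff₀ (by positivity : (0:ℝ) < 4*k)]
      nlinarith [h12, hmR]
    have hBle : (Bad.card : ℝ) ≤ (m:ℝ) * (2:ℝ)^(n*m) / ((m:ℝ)^2 * ε^2 / (4*k)) :=
      (le_div_iff₀ hc0).2 hmarkov
    refine hBle.trans ?_
    rw [div_le_div_iff₀ hc0 (by norm_num : (0:ℝ) < 3)]
    have hPpos : (0:ℝ) < (2:ℝ)^(n*m) := by positivity
    nlinarith [hc3, hPpos]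
  -- the tester succeeds
  refine ⟨m, T, ?_, ?_, ?_⟩
  · -- sample bound
    have h1 : (m:ℝ) < 12 * k / ε ^ 2 + 1 := Nat.ceil_lt_add_one (by positivity)
    have h2 : (1:ℝ) ≤ (k:ℝ) / ε ^ 2 := by
      rw [le_div_iff₀ hε2]
      nlinarith
    have h3 : (m:ℝ) ≤ 13 * k / ε ^ 2 := by
      have e : 12 * (k:ℝ) / ε ^ 2 + (k:ℝ)/ε^2 = 13 * k / ε^2 := by ring
      linarith
    refine h3.trans ?_
    rw [div_le_div_iff₀ hε2 hε2]
    have hkk : (k:ℝ) ≤ (k:ℝ)^2 * (1 + Real.log k) := by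
      nlinarith [sq_nonneg ((k:ℝ) - 1), mul_nonneg (sq_nonneg (k:ℝ)) hlogk]
    nlinarith
  · -- completeness
    intro f hfQ
    have hTgood : ∀ x : Fin m → (Fin n → Bool),
        (∑ j, |cnt x (fun i => f (x i)) j / m - density n (S j) f| ≤ ε/2) →
        T x (fun i => f (x i)) = true := by
      intro x hx
      simp only [hT]
      exact if_pos ⟨f, hfQ, hx⟩
    have hsplit : ∀ x : Fin m → (Fin n → Bool),
        (if T x (fun i => f (x i)) then (1:ℝ) else 0)
          = 1 - (if ¬(T x (fun i => f (x i)) = true) then (1:ℝ) else 0) := by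
      intro x
      by_cases h : T x (fun i => f (x i)) = true <;> simp [h]
    have hrej : ∑ x : Fin m → (Fin n → Bool), (if ¬(T x (fun i => f (x i)) = true) then (1:ℝ) else 0)
        ≤ (2:ℝ) ^ (n * m) / 3 := by
      rw [Finset.sum_boole]
      refine le_trans ?_ (key f)
      have hsub : Finset.univ.filter (fun x : Fin m → (Fin n → Bool) => ¬(T x (fun i => f (x i)) = true))
          ⊆ Finset.univ.filter (fun x : Fin m → (Fin n → Bool) =>
            ¬ (∑ j, |cnt x (fun i => f (x i)) j / m - density n (S j) f| ≤ ε/2)) := by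
        intro x hx
        rw [Finset.mem_filter] at hx ⊢
        exact ⟨hx.1, fun hc => hx.2 (hTgood x hc)⟩
      exact_mod_cast Finset.card_le_card hsub
    have hsum : ∑ x : Fin m → (Fin n → Bool), (if T x (fun i => f (x i)) then (1:ℝ) else 0)
        = (2:ℝ)^(n*m) - ∑ x : Fin m → (Fin n → Bool),
          (if ¬(T x (fun i => f (x i)) = true) then (1:ℝ) else 0) := by
      rw [Finset.sum_congr rfl (fun x _ => hsplit x), Finset.sum_sub_distrib,
        Finset.sum_const, Finset.card_univ, nsmul_eq_mul, mul_one, hcardXM]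
    unfold acceptProb0
    rw [le_div_iff₀ (by positivity : (0:ℝ) < (2:ℝ)^(n*m)), hsum]
    linarith [hrej]
  · -- soundness
    intro f hf
    have hTbad : ∀ x : Fin m → (Fin n → Bool), T x (fun i => f (x i)) = true →
        ¬ (∑ j, |cnt x (fun i => f (x i)) j / m - density n (S j) f| ≤ ε/2) := by
      intro x hTx hgood
      have hP : ∃ g ∈ Q, ∑ j, |cnt x (fun i => f (x i)) j / m - density n (S j) g| ≤ ε/2 := by
        by_contra hnp
        simp only [hT] at hTx
        rw [if_neg hnp] at hTx
        exact Bool.false_ne_true hTx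
      obtain ⟨g, hgQ, hgc⟩ := hP
      have htri : ∑ j, |density n (S j) f - density n (S j) g| ≤ ε := by
        have step : ∀ j, |density n (S j) f - density n (S j) g|
            ≤ |density n (S j) f - cnt x (fun i => f (x i)) j / m|
              + |cnt x (fun i => f (x i)) j / m - density n (S j) g| :=
          fun j => abs_sub_le _ _ _
        have e5 : ∑ j, |density n (S j) f - cnt x (fun i => f (x i)) j / m|
            = ∑ j, |cnt x (fun i => f (x i)) j / m - density n (S j) f| :=
          Finset.sum_congr rfl fun j _ => abs_sub_comm _ _
        calc ∑ j, |density n (S j) f - density n (S j) g|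
            ≤ ∑ j, (|density n (S j) f - cnt x (fun i => f (x i)) j / m|
              + |cnt x (fun i => f (x i)) j / m - density n (S j) g|) :=
              Finset.sum_le_sum fun j _ => step j
          _ = (∑ j, |density n (S j) f - cnt x (fun i => f (x i)) j / m|)
              + ∑ j, |cnt x (fun i => f (x i)) j / m - density n (S j) g| :=
              Finset.sum_add_distrib
          _ ≤ ε/2 + ε/2 := by rw [e5]; exact add_le_add hgood hgc
          _ = ε := by ring
      obtain ⟨h, hhd, hhdist⟩ := aux_mod n k S hdisj f g
      have hhQ : h ∈ Q := (hsym h g hhd).2 hgQ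
      exact hf ⟨h, hhQ, by rw [hhdist]; exact htri⟩
    have hacc : ∑ x : Fin m → (Fin n → Bool), (if T x (fun i => f (x i)) then (1:ℝ) else 0)
        ≤ (2:ℝ) ^ (n * m) / 3 := by
      rw [Finset.sum_boole]
      refine le_trans ?_ (key f)
      have hsub : Finset.univ.filter (fun x : Fin m → (Fin n → Bool) => T x (fun i => f (x i)) = true)
          ⊆ Finset.univ.filter (fun x : Fin m → (Fin n → Bool) =>
            ¬ (∑ j, |cnt x (fun i => f (x i)) j / m - density n (S j) f| ≤ ε/2)) := by
        intro x hx
        rw [Finset.mem_filter] at hx ⊢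
        exact ⟨hx.1, hTbad x hx.2⟩
      exact_mod_cast Finset.card_le_card hsub
    unfold acceptProb0
    rw [div_le_iff₀ (by positivity : (0:ℝ) < (2:ℝ)^(n*m))]
    linarith [hacc]
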